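/- For every prime p, B_p \equiv 2 (mod p). -/

import Mathlib

/-- Stirling numbers of the second kind. -/
def stirling : ℕ → ℕ → ℕ
  | 0, 0 => 1
  | 0, _ + 1 => 0
  | _ + 1, 0 => 0
  | n + 1, k + 1 => stirling n k + (k + 1) * stirling n (k + 1)

/-- The `n`-th Bell number. -/
def bell (n : ℕ) : ℕ := ∑ k ∈ Finset.range (n + 1), stirling n k

/-!
The numbers `k! S(n, k)` are the `k`-th forward differences of `x ↦ x ^ n` at `0`: both satisfy
the Stirling recurrence, by a Leibniz rule for `Δ^[k] (x * f x)`. Over `ZMod p` the function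
`x ↦ x ^ p` is `x ↦ x`, and `k!` is a unit for `k < p`, so `S(p, k) ≡ S(1, k) (mod p)` for
`k < p`. Hence `B_p ≡ S(1, 0) + S(1, 1) + S(p, p) = 2`.
-/

open Finset fwdDiff

theorem stirling_eq_stirlingSecond : stirling = Nat.stirlingSecond := by
  funext n k
  induction n generalizing k with
  | zero => cases k <;> rfl
  | succ n ih =>
    cases k with
    | zero => rfl
    | succ k => rw [stirling, Nat.stirlingSecond_succ_succ, ih, ih, add_comm]

theorem fwdDiff_mul_self {R : Type*} [Ring R] (f : R → R) :
    Δ_[1] (fun r ↦ r * f r) = (fun r ↦ r * Δ_[1] f r) + fun r ↦ f (r + 1) := by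
  ext x
  simp only [fwdDiff, Pi.add_apply]
  noncomm_ring

theorem fwdDiff_iter_succ_mul_self {R : Type*} [Ring R] (f : R → R) (k : ℕ) (x : R) :
    Δ_[1] ^[k + 1] (fun r ↦ r * f r) x =
      x * Δ_[1] ^[k + 1] f x + (k + 1) * Δ_[1] ^[k] f (x + 1) := by
  induction k generalizing f with
  | zero => simp [fwdDiff_mul_self]
  | succ k ih =>
    rw [Function.iterate_succ_apply, fwdDiff_mul_self, fwdDiff_iter_add, Pi.add_apply, ih,
      fwdDiff_iter_comp_add, ← Function.iterate_succ_apply, ← Function.iterate_succ_apply,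
      Function.iterate_succ_apply' _ (k + 1), fwdDiff]
    push_cast
    noncomm_ring

theorem factorial_mul_stirlingSecond_eq_fwdDiff_iter {R : Type*} [CommRing R] (n k : ℕ) :
    ((k.factorial * Nat.stirlingSecond n k : ℕ) : R) = Δ_[1] ^[k] (fun r : R ↦ r ^ n) 0 := by
  induction n generalizing k with
  | zero =>
    cases k with
    | zero => simp
    | succ k => rw [fwdDiff_iter_pow_eq_zero_of_lt k.succ_pos]; simp
  | succ n ih =>
    cases k with
    | zero => simp
    | succ k =>
      have hshift : Δ_[1] ^[k] (fun r : R ↦ r ^ n) (0 + 1) =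
          Δ_[1] ^[k] (fun r : R ↦ r ^ n) 0 + Δ_[1] ^[k + 1] (fun r : R ↦ r ^ n) 0 := by
        rw [Function.iterate_succ_apply', fwdDiff, add_sub_cancel]
      simp_rw [pow_succ', fwdDiff_iter_succ_mul_self, hshift, ← ih, Nat.stirlingSecond_succ_succ,
        Nat.factorial_succ]
      push_cast
      ring

theorem stirlingSecond_add_prime_eq {p : ℕ} [Fact p.Prime] (n : ℕ) {k : ℕ} (hk : k < p) :
    (Nat.stirlingSecond (n + p) k : ZMod p) = Nat.stirlingSecond (n + 1) k := by
  have hfac : (k.factorial : ZMod p) ≠ 0 := by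
    rw [Ne, ZMod.natCast_eq_zero_iff, Nat.Prime.dvd_factorial Fact.out]
    exact hk.not_ge
  have hpow : (fun r : ZMod p ↦ r ^ (n + p)) = fun r ↦ r ^ (n + 1) := by
    ext r
    rw [pow_add, pow_succ, ZMod.pow_card]
  have h := factorial_mul_stirlingSecond_eq_fwdDiff_iter (R := ZMod p) (n + p) k
  rw [hpow, ← factorial_mul_stirlingSecond_eq_fwdDiff_iter, Nat.cast_mul, Nat.cast_mul] at h
  exact mul_left_cancel₀ hfac h

theorem bell_prime_mod (p : ℕ) (hp : p.Prime) : bell p ≡ 2 [MOD p] := by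
  have := Fact.mk hp
  have hlow : ∑ k ∈ range p, (Nat.stirlingSecond p k : ZMod p) =
      ∑ k ∈ range 2, (Nat.stirlingSecond 1 k : ZMod p) := by
    rw [sum_congr rfl fun k hk ↦ by simpa using stirlingSecond_add_prime_eq 0 (mem_range.1 hk)]
    refine (sum_subset (range_subset_range.2 hp.two_le) fun k _ hk ↦ ?_).symm
    rw [Nat.stirlingSecond_eq_zero_of_lt (by simpa using hk), Nat.cast_zero]
  rw [← ZMod.natCast_eq_natCast_iff, bell, stirling_eq_stirlingSecond, Nat.cast_sum,
    sum_range_succ, hlow, Nat.stirlingSecond_self]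
  norm_num [sum_range_succ, Nat.stirlingSecond_one_right]
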